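/- arXiv:1806.09042 — 2 statements merged into one kernel-verified Lean document; each statement's English description precedes it below -/
import Mathlib

section
/- There is no unitary operator U on H ⊗ H (for a Hilbert space H of dimension at least 2, with a fixed 'blank' unit vector b) such that U(ψ ⊗ b) = ψ ⊗ ψ for all unit vectors ψ in H. -/
open scoped InnerProductSpace

/-- The tensor product of two vectors in `ℂ^n`, realized in `ℂ^(n × n)`. -/
noncomputable def tensorVec {n : ℕ} (ψ φ : EuclideanSpace ℂ (Fin n)) :
    EuclideanSpace ℂ (Fin n × Fin n) :=
  WithLp.toLp 2 (fun p => ψ p.1 * φ p.2)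

/-! A cloning isometry would map `⟪ψ ⊗ b, φ ⊗ b⟫ = ⟪ψ, φ⟫` to `⟪ψ ⊗ ψ, φ ⊗ φ⟫ = ⟪ψ, φ⟫²`, so every
inner product of unit vectors would be `0` or `1`. The superposition `(3/5) e₀ + (4/5) e₁` of two
orthonormal vectors is a unit vector whose inner product with `e₀` is `3/5`. -/

lemma inner_tensorVec {n : ℕ} (ψ φ x y : EuclideanSpace ℂ (Fin n)) :
    ⟪tensorVec ψ x, tensorVec φ y⟫_ℂ = ⟪ψ, φ⟫_ℂ * ⟪x, y⟫_ℂ := by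
  simp only [PiLp.inner_apply, tensorVec, RCLike.inner_apply, map_mul,
    Fintype.sum_prod_type, Finset.mul_sum, Finset.sum_mul]
  rw [Finset.sum_comm]
  refine Finset.sum_congr rfl fun i _ => Finset.sum_congr rfl fun j _ => ?_
  ring

lemma inner_eq_sq_of_clones {n : ℕ}
    (U : EuclideanSpace ℂ (Fin n × Fin n) →ₗᵢ[ℂ] EuclideanSpace ℂ (Fin n × Fin n))
    {b : EuclideanSpace ℂ (Fin n)} (hb : ‖b‖ = 1)
    (hU : ∀ ψ : EuclideanSpace ℂ (Fin n), ‖ψ‖ = 1 → U (tensorVec ψ b) = tensorVec ψ ψ)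
    {ψ φ : EuclideanSpace ℂ (Fin n)} (hψ : ‖ψ‖ = 1) (hφ : ‖φ‖ = 1) :
    ⟪ψ, φ⟫_ℂ = ⟪ψ, φ⟫_ℂ ^ 2 := by
  have hbb : ⟪b, b⟫_ℂ = 1 := by simp [inner_self_eq_norm_sq_to_K, hb]
  calc ⟪ψ, φ⟫_ℂ = ⟪tensorVec ψ b, tensorVec φ b⟫_ℂ := by rw [inner_tensorVec, hbb, mul_one]
    _ = ⟪U (tensorVec ψ b), U (tensorVec φ b)⟫_ℂ := (U.inner_map_map _ _).symm
    _ = ⟪ψ, φ⟫_ℂ ^ 2 := by rw [hU ψ hψ, hU φ hφ, inner_tensorVec, sq]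

lemma Orthonormal.exists_norm_eq_one_inner_ne_sq {E ι : Type*} [NormedAddCommGroup E]
    [InnerProductSpace ℂ E] {e : ι → E} (he : Orthonormal ℂ e) {i j : ι} (hij : i ≠ j) :
    ∃ φ : E, ‖φ‖ = 1 ∧ ⟪e i, φ⟫_ℂ ≠ ⟪e i, φ⟫_ℂ ^ 2 := by
  set φ := (3 / 5 : ℂ) • e i + (4 / 5 : ℂ) • e j
  have hinner : ⟪e i, φ⟫_ℂ = 3 / 5 := by simp [φ, he.1 i, he.2 hij]
  refine ⟨φ, ?_, by rw [hinner]; norm_num⟩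
  have hpyth := norm_add_sq_eq_norm_sq_add_norm_sq_of_inner_eq_zero (𝕜 := ℂ)
    ((3 / 5 : ℂ) • e i) ((4 / 5 : ℂ) • e j) (by simp [inner_smul_left, inner_smul_right, he.2 hij])
  simp only [norm_smul, he.1 i, he.1 j] at hpyth
  norm_num at hpyth
  nlinarith [norm_nonneg φ]

/-- **No-cloning theorem**: for a Hilbert space of dimension at least 2 with a fixed
"blank" unit vector `b`, there is no unitary `U` on `H ⊗ H` with
`U (ψ ⊗ b) = ψ ⊗ ψ` for every unit vector `ψ`. -/
theorem no_cloning {n : ℕ} (hn : 2 ≤ n) (b : EuclideanSpace ℂ (Fin n)) (hb : ‖b‖ = 1) :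
    ¬ ∃ U : EuclideanSpace ℂ (Fin n × Fin n) ≃ₗᵢ[ℂ] EuclideanSpace ℂ (Fin n × Fin n),
      ∀ ψ : EuclideanSpace ℂ (Fin n), ‖ψ‖ = 1 → U (tensorVec ψ b) = tensorVec ψ ψ := by
  rintro ⟨U, hU⟩
  have he := (EuclideanSpace.basisFun (Fin n) ℂ).orthonormal
  have h01 : (⟨0, by omega⟩ : Fin n) ≠ ⟨1, by omega⟩ := by simp
  obtain ⟨φ, hφ, hne⟩ := he.exists_norm_eq_one_inner_ne_sq h01
  exact hne (inner_eq_sq_of_clones U.toLinearIsometry hb hU (he.1 _) hφ)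
end

section
/- With U = ∑_a P_a ⊗ X'_{ap} as above, one has U*(I ⊗ P'_p)U = ∑_a P_a ⊗ P'_a, and for c ≠ p, U*(I ⊗ P'_c)U = P_c ⊗ P'_p + (I − P_c) ⊗ P'_c. -/
open Finset Matrix
open scoped Kronecker

variable {n m : ℕ} {ι : Type*} [Fintype ι] [DecidableEq ι]

/-- The rank-one projection `|Ψₐ⟩⟨Ψₐ|` associated to the vector `Ψ a`. -/
def probeProj (Ψ : ι → Fin m → ℂ) (a : ι) : Matrix (Fin m) (Fin m) ℂ :=
  vecMulVec (Ψ a) (star (Ψ a))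

/-- The operator `X'_{ab}` swapping `Ψ a` and `Ψ b` and acting as the identity on the
orthogonal complement: `X'_{ab} = |Ψ_b⟩⟨Ψ_a| + |Ψ_a⟩⟨Ψ_b| + ∑_{c ≠ a,b} |Ψ_c⟩⟨Ψ_c|`
for `a ≠ b`, and `X'_{aa} = I`. -/
noncomputable def probeSwap (Ψ : ι → Fin m → ℂ) (a b : ι) : Matrix (Fin m) (Fin m) ℂ :=
  if a = b then 1 else
    vecMulVec (Ψ b) (star (Ψ a)) + vecMulVec (Ψ a) (star (Ψ b)) +
      ∑ c ∈ univ.filter (fun c => c ≠ a ∧ c ≠ b), vecMulVec (Ψ c) (star (Ψ c))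

/-- The interaction unitary `U = ∑ₐ Pₐ ⊗ X'_{ap}`. -/
noncomputable def probeUnitary (P : ι → Matrix (Fin n) (Fin n) ℂ) (Ψ : ι → Fin m → ℂ) (p : ι) :
    Matrix (Fin n × Fin m) (Fin n × Fin m) ℂ :=
  ∑ a, (P a) ⊗ₖ (probeSwap Ψ a p)

/-!
Because the `Pₐ` are orthogonal projections, `U` is block diagonal and conjugation by it acts
blockwise: `U* (I ⊗ Q) U = ∑ₐ Pₐ ⊗ X'_{ap} Q X'_{ap}`. On the orthonormal family, `X'_{ap}` acts
as the transposition `(a p)` of the labels, `X'_{ap} Ψₓ = Ψ_{(a p) x}`, so it conjugates `P'ₓ`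
into `P'_{(a p) x}`. Both identities then follow by reading off `(a p) p = a`, and for `c ≠ p`,
`(a p) c = p` if `a = c` and `= c` otherwise, using `∑ₐ Pₐ = I`.
-/

namespace Matrix

variable {R κ l : Type*}

theorem sum_kronecker {l' κ' : Type*} [NonUnitalNonAssocSemiring R] {β : Type*} (s : Finset β)
    (A : β → Matrix l l' R) (B : Matrix κ κ' R) :
    (∑ a ∈ s, A a) ⊗ₖ B = ∑ a ∈ s, A a ⊗ₖ B := by
  ext
  simp [Matrix.sum_apply, Finset.sum_mul]

theorem conjTranspose_sum_kronecker_mul_one_kronecker_mul [CommSemiring R] [StarRing R]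
    [Fintype κ] [Fintype l] [DecidableEq l] {β : Type*} [Fintype β] (P : β → Matrix l l R)
    (X : β → Matrix κ κ R) (hherm : ∀ a, (P a)ᴴ = P a) (hidem : ∀ a, P a * P a = P a)
    (horth : ∀ a b, a ≠ b → P a * P b = 0) (Q : Matrix κ κ R) :
    (∑ a, P a ⊗ₖ X a)ᴴ * (1 ⊗ₖ Q) * ∑ a, P a ⊗ₖ X a = ∑ a, P a ⊗ₖ ((X a)ᴴ * Q * X a) := by
  simp only [conjTranspose_sum, conjTranspose_kronecker, hherm, Finset.sum_mul, Finset.mul_sum,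
    ← mul_kronecker_mul, mul_one]
  refine sum_congr rfl fun a _ => ?_
  rw [sum_eq_single a (fun b _ hba => by rw [horth _ _ hba, zero_kronecker]) (by simp), hidem]

theorem sum_vecMulVec_mulVec_of_orthonormal [CommSemiring R] [StarRing R] [Fintype κ]
    {β : Type*} [Fintype β] [DecidableEq β] (Ψ : β → κ → R)
    (hΨon : ∀ a b, star (Ψ a) ⬝ᵥ Ψ b = if a = b then 1 else 0) (f : β → β) (x : β) :
    (∑ c, vecMulVec (Ψ (f c)) (star (Ψ c))) *ᵥ Ψ x = Ψ (f x) := by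
  simp [sum_mulVec, vecMulVec_mulVec, hΨon]

theorem IsHermitian.mul_vecMulVec_star_mul [CommSemiring R] [StarRing R] [Fintype κ]
    {A : Matrix κ κ R} (hA : A.IsHermitian) {u v : κ → R} (h : A *ᵥ u = v) :
    A * vecMulVec u (star u) * A = vecMulVec v (star v) := by
  have hstar : star u ᵥ* A = star v := by rw [← h, star_mulVec, hA.eq]
  rw [mul_vecMulVec, vecMulVec_mul, h, hstar]

end Matrix

theorem probeSwap_eq_sum (Ψ : ι → Fin m → ℂ) {a b : ι} (hab : a ≠ b) :
    probeSwap Ψ a b = ∑ c, vecMulVec (Ψ (Equiv.swap a b c)) (star (Ψ c)) := by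
  have hb : b ∈ univ.erase a := mem_erase.2 ⟨hab.symm, mem_univ b⟩
  have hrest : univ.filter (fun c => c ≠ a ∧ c ≠ b) = (univ.erase a).erase b := by
    ext c
    simp [and_comm]
  rw [probeSwap, if_neg hab, ← add_sum_erase _ _ (mem_univ a), ← add_sum_erase _ _ hb,
    Equiv.swap_apply_left, Equiv.swap_apply_right, ← add_assoc, hrest]
  refine congrArg _ (sum_congr rfl fun c hc => ?_)
  simp only [mem_erase] at hc
  rw [Equiv.swap_apply_of_ne_of_ne hc.2.1 hc.1]

theorem probeSwap_isHermitian (Ψ : ι → Fin m → ℂ) (a b : ι) : (probeSwap Ψ a b).IsHermitian := by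
  unfold probeSwap
  split_ifs
  · exact isHermitian_one
  · simp only [IsHermitian, conjTranspose_add, conjTranspose_sum, conjTranspose_vecMulVec,
      star_star, add_comm (vecMulVec (Ψ a) _)]

theorem probeSwap_mulVec {Ψ : ι → Fin m → ℂ}
    (hΨon : ∀ a b, star (Ψ a) ⬝ᵥ Ψ b = if a = b then 1 else 0) (a b x : ι) :
    probeSwap Ψ a b *ᵥ Ψ x = Ψ (Equiv.swap a b x) := by
  rcases eq_or_ne a b with rfl | hab
  · simp [probeSwap]
  · rw [probeSwap_eq_sum Ψ hab, sum_vecMulVec_mulVec_of_orthonormal Ψ hΨon]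

theorem probeSwap_mul_probeProj_mul {Ψ : ι → Fin m → ℂ}
    (hΨon : ∀ a b, star (Ψ a) ⬝ᵥ Ψ b = if a = b then 1 else 0) (a b x : ι) :
    probeSwap Ψ a b * probeProj Ψ x * probeSwap Ψ a b = probeProj Ψ (Equiv.swap a b x) :=
  (probeSwap_isHermitian Ψ a b).mul_vecMulVec_star_mul (probeSwap_mulVec hΨon a b x)

theorem probeUnitary_conj_one_kronecker_probeProj (P : ι → Matrix (Fin n) (Fin n) ℂ)
    {Ψ : ι → Fin m → ℂ} (p : ι) (hherm : ∀ a, (P a)ᴴ = P a) (hidem : ∀ a, P a * P a = P a)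
    (horth : ∀ a b, a ≠ b → P a * P b = 0)
    (hΨon : ∀ a b, star (Ψ a) ⬝ᵥ Ψ b = if a = b then 1 else 0) (x : ι) :
    (probeUnitary P Ψ p)ᴴ * (1 ⊗ₖ probeProj Ψ x) * probeUnitary P Ψ p =
      ∑ a, P a ⊗ₖ probeProj Ψ (Equiv.swap a p x) := by
  simp only [probeUnitary, conjTranspose_sum_kronecker_mul_one_kronecker_mul P _ hherm hidem horth,
    (probeSwap_isHermitian Ψ _ p).eq, probeSwap_mul_probeProj_mul hΨon]

theorem probeUnitary_conj_general (P : ι → Matrix (Fin n) (Fin n) ℂ) (Ψ : ι → Fin m → ℂ) (p : ι)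
    (hherm : ∀ a, (P a)ᴴ = P a) (hidem : ∀ a, P a * P a = P a)
    (horth : ∀ a b, a ≠ b → P a * P b = 0) (hsum : ∑ a, P a = 1)
    (hΨon : ∀ a b, star (Ψ a) ⬝ᵥ Ψ b = if a = b then 1 else 0) :
    (probeUnitary P Ψ p)ᴴ * ((1 : Matrix (Fin n) (Fin n) ℂ) ⊗ₖ probeProj Ψ p) *
        probeUnitary P Ψ p = ∑ a, (P a) ⊗ₖ probeProj Ψ a ∧
      ∀ c, c ≠ p →
        (probeUnitary P Ψ p)ᴴ * ((1 : Matrix (Fin n) (Fin n) ℂ) ⊗ₖ probeProj Ψ c) *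
            probeUnitary P Ψ p =
          (P c) ⊗ₖ probeProj Ψ p + ((1 : Matrix (Fin n) (Fin n) ℂ) - P c) ⊗ₖ probeProj Ψ c := by
  simp only [probeUnitary_conj_one_kronecker_probeProj P p hherm hidem horth hΨon,
    Equiv.swap_apply_right, true_and]
  intro c hcp
  rw [← add_sum_erase _ _ (mem_univ c), Equiv.swap_apply_left, ← hsum,
    ← sum_erase_eq_sub (mem_univ c), sum_kronecker]
  refine congrArg _ (sum_congr rfl fun a ha => ?_)
  rw [Equiv.swap_apply_of_ne_of_ne (ne_of_mem_erase ha).symm hcp]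

/-- `U*(I ⊗ P'_p)U = ∑ₐ Pₐ ⊗ P'ₐ`, and for `c ≠ p`,
`U*(I ⊗ P'_c)U = P_c ⊗ P'_p + (I − P_c) ⊗ P'_c`. -/
theorem probeUnitary_conj (P : ι → Matrix (Fin n) (Fin n) ℂ) (Ψ : ι → Fin m → ℂ) (p : ι)
    (hherm : ∀ a, (P a)ᴴ = P a) (hidem : ∀ a, P a * P a = P a)
    (horth : ∀ a b, a ≠ b → P a * P b = 0) (hsum : ∑ a, P a = 1)
    (hΨon : ∀ a b, star (Ψ a) ⬝ᵥ Ψ b = if a = b then 1 else 0)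
    (hΨcomplete : ∑ c, probeProj Ψ c = 1) :
    (probeUnitary P Ψ p)ᴴ * ((1 : Matrix (Fin n) (Fin n) ℂ) ⊗ₖ probeProj Ψ p) *
        probeUnitary P Ψ p = ∑ a, (P a) ⊗ₖ probeProj Ψ a ∧
      ∀ c, c ≠ p →
        (probeUnitary P Ψ p)ᴴ * ((1 : Matrix (Fin n) (Fin n) ℂ) ⊗ₖ probeProj Ψ c) *
            probeUnitary P Ψ p =
          (P c) ⊗ₖ probeProj Ψ p + ((1 : Matrix (Fin n) (Fin n) ℂ) - P c) ⊗ₖ probeProj Ψ c :=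
  probeUnitary_conj_general P Ψ p hherm hidem horth hsum hΨon
end
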